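/- (Nine lemma, upper version.) Consider a commutative 3×3 diagram in C with rows K --u--> K' --u'--> K'', A --a--> A' --a'--> A'', B --b--> B' --b'--> B'' and columns K → A → B (morphisms k, f), K' → A' → B' (morphisms k', f'), K'' → A'' → B'' (morphisms k'', f''), in which all three columns are short Z-exact sequences and the induced morphisms Z(b') : Z(B') → Z(B'') and Z(f'') : Z(A'') → Z(B'') between zero parts are isomorphisms. If the last two rows (A → A' → A'' and B → B' → B'') are short Z-exact sequences, then the first row K → K' → K'' is a short Z-exact sequence. -/

import Mathlib

open CategoryTheory CategoryTheory.Limits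

universe v u

/-- A full subcategory of "trivial" objects, given by a predicate `Z` on objects,
satisfying conditions (i)-(iii):
(i) every object `A` has a monomorphism `ε A : zpart A ⟶ A` with `zpart A` trivial,
unique up to isomorphism among monomorphisms into `A` with trivial domain;
(ii) for every `A` and trivial `W`, `Hom(W, A)` has at most one element;
(iii) for every monomorphism `z : W ⟶ A` and morphism `z' : W' ⟶ A` with `W, W'`
trivial, there is a unique `φ : W' ⟶ W` with `φ ≫ z = z'`. -/
structure TrivialObjects (C : Type u) [Category.{v} C] where
  Z : C → Prop
  zpart : C → C
  zpart_mem : ∀ A : C, Z (zpart A)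
  ε : ∀ A : C, zpart A ⟶ A
  ε_mono : ∀ A : C, Mono (ε A)
  zsub_uniq : ∀ (A W : C), Z W → ∀ (e : W ⟶ A), Mono e →
    ∃ φ : W ≅ zpart A, φ.hom ≫ ε A = e
  posetal : ∀ (W A : C), Z W → ∀ f g : W ⟶ A, f = g
  zlift : ∀ (W A : C) (z : W ⟶ A), Mono z → Z W →
    ∀ (W' : C) (z' : W' ⟶ A), Z W' → ∃! φ : W' ⟶ W, φ ≫ z = z'

variable {C : Type u} [Category.{v} C]

/-- `N_Z`: the class of morphisms factoring through a trivial object. -/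
def InNZ (T : TrivialObjects C) {A B : C} (f : A ⟶ B) : Prop :=
  ∃ (W : C) (_ : T.Z W) (p : A ⟶ W) (i : W ⟶ B), p ≫ i = f

/-- `k : K ⟶ A` is a `Z`-kernel of `f : A ⟶ B` if `k ≫ f ∈ N_Z` and every
`e : E ⟶ A` with `e ≫ f ∈ N_Z` factors uniquely through `k`. -/
def IsZKernel (T : TrivialObjects C) {K A B : C} (k : K ⟶ A) (f : A ⟶ B) : Prop :=
  InNZ T (k ≫ f) ∧ ∀ (E : C) (e : E ⟶ A), InNZ T (e ≫ f) → ∃! φ : E ⟶ K, φ ≫ k = e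

/-- A sequence `K --k--> A --f--> B` is short `Z`-exact if `f` is a regular
epimorphism and `k` is a `Z`-kernel of `f`. -/
def ShortZExact (T : TrivialObjects C) {K A B : C} (k : K ⟶ A) (f : A ⟶ B) : Prop :=
  Nonempty (RegularEpi f) ∧ IsZKernel T k f

/-- Every morphism factors as a regular epimorphism followed by a monomorphism. -/
def RegEpiMonoFact (C : Type u) [Category.{v} C] : Prop :=
  ∀ {X Y : C} (f : X ⟶ Y), ∃ (I : C) (p : X ⟶ I) (i : I ⟶ Y),
    Nonempty (RegularEpi p) ∧ Mono i ∧ p ≫ i = f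

/-- Regular epimorphisms are stable under pullback. -/
def RegEpiPullbackStable (C : Type u) [Category.{v} C] : Prop :=
  ∀ {P X Y W : C} (fst : P ⟶ X) (snd : P ⟶ Y) (f : X ⟶ W) (g : Y ⟶ W),
    IsPullback fst snd f g → Nonempty (RegularEpi g) → Nonempty (RegularEpi fst)

/-- Protomodularity property (P1): in a commutative diagram of two horizontally
composed squares, if the left square and the outer rectangle are pullbacks and the
middle vertical morphism is a regular epimorphism, then the right square is a
pullback. -/
def ProtoP1 (C : Type u) [Category.{v} C] : Prop :=
  ∀ {A B X A' B' X' : C} (f : A ⟶ B) (g : B ⟶ X) (f' : A' ⟶ B') (g' : B' ⟶ X')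
    (a : A ⟶ A') (b : B ⟶ B') (c : X ⟶ X'),
    g ≫ c = b ≫ g' →
    IsPullback f a b f' → IsPullback (f ≫ g) a c (f' ≫ g') →
    Nonempty (RegularEpi b) → IsPullback g b c g'

/-- Protomodularity property (P2): pullbacks reflect monomorphisms; if the pullback
`fst` of `g` along some morphism `f` is a monomorphism, then `g` is a monomorphism. -/
def ProtoP2 (C : Type u) [Category.{v} C] : Prop :=
  ∀ {P X Y W : C} (fst : P ⟶ X) (snd : P ⟶ Y) (f : X ⟶ W) (g : Y ⟶ W),
    IsPullback fst snd f g → Mono fst → Mono g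

/-! ### Auxiliary lemmas -/

theorem nz_precomp (T : TrivialObjects C) {X A B : C} (g : X ⟶ A) {f : A ⟶ B}
    (h : InNZ T f) : InNZ T (g ≫ f) := by
  obtain ⟨W, hW, p, i, hpi⟩ := h
  exact ⟨W, hW, g ≫ p, i, by rw [Category.assoc, hpi]⟩

theorem nz_postcomp (T : TrivialObjects C) {A B Y : C} {f : A ⟶ B} (h : InNZ T f)
    (g : B ⟶ Y) : InNZ T (f ≫ g) := by
  obtain ⟨W, hW, p, i, hpi⟩ := h
  exact ⟨W, hW, p, i ≫ g, by rw [← Category.assoc, hpi]⟩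

theorem nz_fac (T : TrivialObjects C) {A B : C} {f : A ⟶ B} (h : InNZ T f) :
    ∃ q : A ⟶ T.zpart B, q ≫ T.ε B = f := by
  obtain ⟨W, hW, p, i, hpi⟩ := h
  obtain ⟨φ, hφ, -⟩ := T.zlift (T.zpart B) B (T.ε B) (T.ε_mono B) (T.zpart_mem B) W i hW
  exact ⟨p ≫ φ, by rw [Category.assoc, hφ, hpi]⟩

theorem IsZKernel.mono {T : TrivialObjects C} {K A B : C} {k : K ⟶ A} {f : A ⟶ B}
    (hk : IsZKernel T k f) : Mono k := by
  constructor
  intro X g h hgh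
  have hx : InNZ T ((h ≫ k) ≫ f) := by
    rw [Category.assoc]; exact nz_precomp T h hk.1
  obtain ⟨φ, hφ, hu⟩ := hk.2 X (h ≫ k) hx
  exact (hu g hgh).trans (hu h rfl).symm

theorem IsZKernel.eps_fac {T : TrivialObjects C} {K A B : C} {k : K ⟶ A} {f : A ⟶ B}
    (hk : IsZKernel T k f) : ∃ d : T.zpart A ⟶ K, d ≫ k = T.ε A := by
  obtain ⟨d, hd, -⟩ := hk.2 (T.zpart A) (T.ε A)
    ⟨T.zpart A, T.zpart_mem A, 𝟙 _, T.ε A ≫ f, Category.id_comp _⟩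
  exact ⟨d, hd⟩

/-- If `k` is a `Z`-kernel (hence a mono through which `ε` factors), then
`g ≫ k ∈ N_Z` implies `g ∈ N_Z`. -/
theorem IsZKernel.nz_of_comp {T : TrivialObjects C} {K A B : C} {k : K ⟶ A} {f : A ⟶ B}
    (hk : IsZKernel T k f) {X : C} {g : X ⟶ K} (h : InNZ T (g ≫ k)) : InNZ T g := by
  obtain ⟨q, hq⟩ := nz_fac T h
  obtain ⟨d, hd⟩ := hk.eps_fac
  have hmono := hk.mono
  have : (q ≫ d) ≫ k = g ≫ k := by rw [Category.assoc, hd, hq]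
  have hg : g = q ≫ d := (hmono.right_cancellation _ _ this).symm
  exact ⟨T.zpart A, T.zpart_mem A, q, d, hg.symm⟩

/-- A `Z`-kernel is the pullback of the zero part of the codomain. -/
theorem IsZKernel.isPullback {T : TrivialObjects C} {K A B : C} {k : K ⟶ A} {f : A ⟶ B}
    (hk : IsZKernel T k f) {τ : K ⟶ T.zpart B} (hτ : τ ≫ T.ε B = k ≫ f) :
    IsPullback k τ f (T.ε B) := by
  have hkm := hk.mono
  have hεm := T.ε_mono B
  have key : ∀ s : PullbackCone f (T.ε B), ∃! m : s.pt ⟶ K, m ≫ k = s.fst := fun s =>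
    hk.2 s.pt s.fst ⟨T.zpart B, T.zpart_mem B, s.snd, T.ε B, s.condition.symm⟩
  refine IsPullback.of_isLimit (PullbackCone.IsLimit.mk hτ.symm
    (fun s => (key s).choose)
    (fun s => (key s).choose_spec.1)
    (fun s => ?_)
    (fun s m hm _ => (key s).choose_spec.2 m hm))
  apply hεm.right_cancellation
  rw [Category.assoc, hτ, ← Category.assoc, (key s).choose_spec.1, s.condition]

/-- Composing a regular epi with an isomorphism yields a regular epi. -/
noncomputable def regEpi_comp_iso {X Y Z : C} (p : X ⟶ Y) (m : Y ⟶ Z) (hp : RegularEpi p)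
    [IsIso m] : RegularEpi (p ≫ m) where
  W := hp.W
  left := hp.left
  right := hp.right
  w := by rw [← Category.assoc, ← Category.assoc, hp.w]
  isColimit := IsColimit.ofIsoColimit hp.isColimit (Cofork.ext (asIso m) (by simp))

/-- With regular epi–mono factorizations, every strong epi is a regular epi. -/
theorem regEpi_of_strongEpi (hfact : RegEpiMonoFact C) {X Y : C} (f : X ⟶ Y)
    (hf : StrongEpi f) : Nonempty (RegularEpi f) := by
  obtain ⟨I, p, i, ⟨hp⟩, hi, hpi⟩ := hfact f
  haveI := hi
  haveI := hp
  haveI : StrongEpi (p ≫ i) := by rwa [hpi]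
  haveI : StrongEpi i := strongEpi_of_strongEpi p i
  haveI : IsIso i := isIso_of_mono_of_strongEpi i
  exact ⟨hpi ▸ regEpi_comp_iso p i hp⟩

/-- Nine lemma, upper version: in a commutative 3×3 diagram with short `Z`-exact
columns, with `Z(b')` and `Z(f'')` isomorphisms, if the last two rows are short
`Z`-exact, then the first row is short `Z`-exact. -/
theorem statement18 [HasFiniteLimits C]
    (hfact : RegEpiMonoFact C) (hstab : RegEpiPullbackStable C)
    (hP1 : ProtoP1 C) (hP2 : ProtoP2 C)
    (T : TrivialObjects C)
    {K K' K'' A A' A'' B B' B'' : C}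
    (u : K ⟶ K') (u' : K' ⟶ K'')
    (a : A ⟶ A') (a' : A' ⟶ A'')
    (b : B ⟶ B') (b' : B' ⟶ B'')
    (k : K ⟶ A) (f : A ⟶ B)
    (k' : K' ⟶ A') (f' : A' ⟶ B')
    (k'' : K'' ⟶ A'') (f'' : A'' ⟶ B'')
    (hsq1 : k ≫ a = u ≫ k') (hsq2 : k' ≫ a' = u' ≫ k'')
    (hsq3 : f ≫ b = a ≫ f') (hsq4 : f' ≫ b' = a' ≫ f'')
    (hcol1 : ShortZExact T k f) (hcol2 : ShortZExact T k' f')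
    (hcol3 : ShortZExact T k'' f'')
    (hZb' : ∃ z : T.zpart B' ⟶ T.zpart B'', z ≫ T.ε B'' = T.ε B' ≫ b' ∧ IsIso z)
    (hZf'' : ∃ z : T.zpart A'' ⟶ T.zpart B'', z ≫ T.ε B'' = T.ε A'' ≫ f'' ∧ IsIso z)
    (hrow2 : ShortZExact T a a') (hrow3 : ShortZExact T b b') :
    ShortZExact T u u' := by
  obtain ⟨⟨hf_epi⟩, hkf⟩ := hcol1
  obtain ⟨⟨hf'_epi⟩, hk'f'⟩ := hcol2
  obtain ⟨⟨hf''_epi⟩, hk''f''⟩ := hcol3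
  obtain ⟨⟨ha'_epi⟩, haa'⟩ := hrow2
  obtain ⟨⟨hb'_epi⟩, hbb'⟩ := hrow3
  have hk''mono := hk''f''.mono
  have hbmono := hbb'.mono
  have hk'mono := hk'f'.mono
  have hkmono := hkf.mono
  -- Part 2 : `u` is a `Z`-kernel of `u'`
  have huu' : InNZ T (u ≫ u') := by
    apply hk''f''.nz_of_comp
    have h1 : (u ≫ u') ≫ k'' = k ≫ (a ≫ a') := by
      rw [Category.assoc, ← hsq2, ← Category.assoc, ← hsq1, Category.assoc]
    rw [h1]
    exact nz_precomp T k haa'.1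
  have huniv : ∀ (E : C) (e : E ⟶ K'), InNZ T (e ≫ u') → ∃! φ : E ⟶ K, φ ≫ u = e := by
    intro E e he
    have hek' : InNZ T ((e ≫ k') ≫ a') := by
      have h2 : (e ≫ k') ≫ a' = (e ≫ u') ≫ k'' := by
        rw [Category.assoc, hsq2, ← Category.assoc]
      rw [h2]
      exact nz_postcomp T he k''
    obtain ⟨ψ, hψ, hψu⟩ := haa'.2 E (e ≫ k') hek'
    have hψf : InNZ T (ψ ≫ f) := by
      apply hbb'.nz_of_comp
      have h3 : (ψ ≫ f) ≫ b = e ≫ (k' ≫ f') := by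
        rw [Category.assoc, hsq3, ← Category.assoc, hψ, Category.assoc]
      rw [h3]
      exact nz_precomp T e hk'f'.1
    obtain ⟨φ, hφ, -⟩ := hkf.2 E ψ hψf
    refine ⟨φ, ?_, ?_⟩
    · apply hk'mono.right_cancellation
      rw [Category.assoc, ← hsq1, ← Category.assoc, hφ, hψ]
    · intro y hy
      have h4 : (y ≫ k) ≫ a = e ≫ k' := by
        rw [Category.assoc, hsq1, ← Category.assoc, hy]
      have hyk : y ≫ k = ψ := hψu _ h4
      apply hkmono.right_cancellation
      rw [hyk, hφ]
  -- Part 1 : `u'` is a regular epimorphism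
  -- `Q := A' ×_{B'} B`
  let π₁ : pullback f' b ⟶ A' := pullback.fst f' b
  let πB : pullback f' b ⟶ B := pullback.snd f' b
  have hQpb : IsPullback π₁ πB f' b := IsPullback.of_hasPullback f' b
  obtain ⟨hπB_epi⟩ := hstab πB π₁ b f' hQpb.flip ⟨hf'_epi⟩
  -- the morphism `π₂ : Q ⟶ K''`
  have hπ₁a'f'' : InNZ T ((π₁ ≫ a') ≫ f'') := by
    have h5 : (π₁ ≫ a') ≫ f'' = πB ≫ (b ≫ b') := by
      rw [Category.assoc, ← hsq4, ← Category.assoc, hQpb.w, Category.assoc]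
    rw [h5]
    exact nz_precomp T πB hbb'.1
  obtain ⟨π₂, hπ₂, -⟩ := hk''f''.2 (pullback f' b) (π₁ ≫ a') hπ₁a'f''
  -- `Q` is also the pullback of `a'` and `k''`
  have hQpb2 : IsPullback π₁ π₂ a' k'' := by
    have key : ∀ s : PullbackCone a' k'', ∃! χ : s.pt ⟶ pullback f' b,
        χ ≫ π₁ = s.fst ∧ χ ≫ π₂ = s.snd := by
      intro s
      have hsb' : InNZ T ((s.fst ≫ f') ≫ b') := by
        have h6 : (s.fst ≫ f') ≫ b' = s.snd ≫ (k'' ≫ f'') := by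
          rw [Category.assoc, hsq4, ← Category.assoc, s.condition, Category.assoc]
        rw [h6]
        exact nz_precomp T s.snd hk''f''.1
      obtain ⟨w, hw, -⟩ := hbb'.2 s.pt (s.fst ≫ f') hsb'
      refine ⟨hQpb.lift s.fst w hw.symm, ⟨hQpb.lift_fst _ _ _, ?_⟩, ?_⟩
      · apply hk''mono.right_cancellation
        rw [Category.assoc, hπ₂, ← Category.assoc, hQpb.lift_fst, s.condition]
      · rintro y ⟨hy1, hy2⟩
        apply hQpb.hom_ext
        · rw [hQpb.lift_fst, hy1]
        · rw [hQpb.lift_snd]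
          apply hbmono.right_cancellation
          rw [Category.assoc, ← hQpb.w, ← Category.assoc, hy1, hw]
    exact IsPullback.of_isLimit (PullbackCone.IsLimit.mk hπ₂.symm
      (fun s => (key s).choose)
      (fun s => (key s).choose_spec.1.1)
      (fun s => (key s).choose_spec.1.2)
      (fun s m h1 h2 => (key s).choose_spec.2 m ⟨h1, h2⟩))
  obtain ⟨hπ₂_epi⟩ := hstab π₂ π₁ k'' a' hQpb2.flip ⟨ha'_epi⟩
  -- the morphism `j : K' ⟶ Q`
  obtain ⟨wj, hwj, -⟩ := hbb'.2 K' (k' ≫ f') (nz_postcomp T hk'f'.1 b')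
  let j : K' ⟶ pullback f' b := hQpb.lift k' wj hwj.symm
  have hjπ₁ : j ≫ π₁ = k' := hQpb.lift_fst _ _ _
  have hjπB : j ≫ πB = wj := hQpb.lift_snd _ _ _
  have hju' : j ≫ π₂ = u' := by
    apply hk''mono.right_cancellation
    rw [Category.assoc, hπ₂, ← Category.assoc, hjπ₁, hsq2]
  have hjmono : Mono j := by
    constructor
    intro X g h hgh
    apply hk'mono.right_cancellation
    rw [← hjπ₁, ← Category.assoc, ← Category.assoc, hgh]
  have hwjNZ : InNZ T wj := by
    apply hbb'.nz_of_comp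
    rw [hwj]
    exact hk'f'.1
  -- `j` is a `Z`-kernel of `πB`
  have hjZK : IsZKernel T j πB := by
    constructor
    · rw [hjπB]
      exact hwjNZ
    · intro X e he
      have heπ₁ : InNZ T ((e ≫ π₁) ≫ f') := by
        have h7 : (e ≫ π₁) ≫ f' = (e ≫ πB) ≫ b := by
          rw [Category.assoc, hQpb.w, Category.assoc]
        rw [h7]
        exact nz_postcomp T he b
      obtain ⟨φ, hφ, hφu⟩ := hk'f'.2 X (e ≫ π₁) heπ₁
      refine ⟨φ, ?_, ?_⟩
      · apply hQpb.hom_ext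
        · rw [Category.assoc, hjπ₁, hφ]
        · rw [Category.assoc, hjπB]
          apply hbmono.right_cancellation
          rw [Category.assoc, hwj, ← Category.assoc, hφ, Category.assoc, hQpb.w,
            ← Category.assoc]
      · intro y hy
        apply hφu
        rw [← hjπ₁, ← Category.assoc, hy]
  -- the morphism `ā : A ⟶ Q`
  let abar : A ⟶ pullback f' b := hQpb.lift a f hsq3.symm
  have habar₁ : abar ≫ π₁ = a := hQpb.lift_fst _ _ _
  have habarB : abar ≫ πB = f := hQpb.lift_snd _ _ _
  have habarπ₂ : InNZ T (abar ≫ π₂) := by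
    apply hk''f''.nz_of_comp
    have h8 : (abar ≫ π₂) ≫ k'' = a ≫ a' := by
      rw [Category.assoc, hπ₂, ← Category.assoc, habar₁]
    rw [h8]
    exact haa'.1
  -- factorization of `u'`
  obtain ⟨I, p, i, ⟨hp⟩, hi_mono, hpi⟩ := hfact u'
  haveI := hi_mono
  -- `Q_I := Q ×_{K''} I`
  let ι : pullback π₂ i ⟶ pullback f' b := pullback.fst π₂ i
  let πI : pullback π₂ i ⟶ I := pullback.snd π₂ i
  have hQIpb : IsPullback ι πI π₂ i := IsPullback.of_hasPullback π₂ i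
  have hιmono : Mono ι := by
    constructor
    intro X g h hgh
    apply hQIpb.hom_ext hgh
    apply hi_mono.right_cancellation
    rw [Category.assoc, Category.assoc, ← hQIpb.w, ← Category.assoc, hgh, Category.assoc,
      hQIpb.w]
  -- `j' : K' ⟶ Q_I`
  have hjπ₂i : j ≫ π₂ = p ≫ i := by rw [hju', hpi]
  let j' : K' ⟶ pullback π₂ i := hQIpb.lift j p hjπ₂i
  have hj'ι : j' ≫ ι = j := hQIpb.lift_fst _ _ _
  -- `ā' : A ⟶ Q_I`
  obtain ⟨ρ₀, hρ₀⟩ := nz_fac T habarπ₂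
  obtain ⟨ψiso, hψiso⟩ := T.zsub_uniq K'' (T.zpart I) (T.zpart_mem I) (T.ε I ≫ i)
    (by haveI := T.ε_mono I; exact mono_comp _ _)
  have hεfac : T.ε K'' = (ψiso.inv ≫ T.ε I) ≫ i := by
    rw [Category.assoc, ← hψiso, ← Category.assoc, Iso.inv_hom_id, Category.id_comp]
  have hwa : abar ≫ π₂ = (ρ₀ ≫ ψiso.inv ≫ T.ε I) ≫ i := by
    rw [← hρ₀, hεfac]
    simp only [Category.assoc]
  let abar' : A ⟶ pullback π₂ i := hQIpb.lift abar _ hwa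
  have habar'ι : abar' ≫ ι = abar := hQIpb.lift_fst _ _ _
  -- `ι ≫ πB` is a regular epi
  have hρf : abar' ≫ (ι ≫ πB) = f := by
    rw [← Category.assoc, habar'ι, habarB]
  haveI : StrongEpi f := by haveI := isRegularEpi_of_regularEpi hf_epi; infer_instance
  haveI : StrongEpi (abar' ≫ (ι ≫ πB)) := by rwa [hρf]
  haveI hρstrong : StrongEpi (ι ≫ πB) := strongEpi_of_strongEpi abar' (ι ≫ πB)
  obtain ⟨hρ_repi⟩ := regEpi_of_strongEpi hfact _ hρstrong
  -- `j'` is a `Z`-kernel of `ι ≫ πB`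
  have hj'ρ : j' ≫ (ι ≫ πB) = wj := by
    rw [← Category.assoc, hj'ι, hjπB]
  have hj'ZK : IsZKernel T j' (ι ≫ πB) := by
    constructor
    · rw [hj'ρ]
      exact hwjNZ
    · intro X e he
      have he' : InNZ T ((e ≫ ι) ≫ πB) := by rwa [Category.assoc]
      obtain ⟨φ, hφ, hφu⟩ := hjZK.2 X (e ≫ ι) he'
      refine ⟨φ, ?_, ?_⟩
      · apply hιmono.right_cancellation
        rw [Category.assoc, hj'ι, hφ]
      · intro y hy
        apply hφu
        rw [← hj'ι, ← Category.assoc, hy]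
  -- the two zero-part squares
  obtain ⟨τ', hτ'⟩ := nz_fac T hwjNZ
  have hsq_left : IsPullback j' τ' (ι ≫ πB) (T.ε B) :=
    hj'ZK.isPullback (hτ'.trans hj'ρ.symm)
  have hsq_outer : IsPullback j τ' πB (T.ε B) :=
    hjZK.isPullback (hτ'.trans hjπB.symm)
  -- protomodularity : `ι` is the pullback of `𝟙 B`
  have hP1app : IsPullback ι (ι ≫ πB) πB (𝟙 B) := by
    apply hP1 j' ι (T.ε B) (𝟙 B) τ' (ι ≫ πB) πB (Category.comp_id _).symm hsq_left ?_
      ⟨hρ_repi⟩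
    rw [hj'ι, Category.comp_id]
    exact hsq_outer
  -- split `ι`, conclude `i` is iso
  let l : pullback f' b ⟶ pullback π₂ i := hP1app.lift (𝟙 _) πB (by simp)
  have hlι : l ≫ ι = 𝟙 _ := hP1app.lift_fst _ _ _
  have hπ₂fac : (l ≫ πI) ≫ i = π₂ := by
    rw [Category.assoc, ← hQIpb.w, ← Category.assoc, hlι, Category.id_comp]
  haveI : StrongEpi π₂ := by haveI := isRegularEpi_of_regularEpi hπ₂_epi; infer_instance
  haveI : StrongEpi ((l ≫ πI) ≫ i) := by rwa [hπ₂fac]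
  haveI : StrongEpi i := strongEpi_of_strongEpi (l ≫ πI) i
  haveI : IsIso i := isIso_of_mono_of_strongEpi i
  haveI : StrongEpi p := by haveI := isRegularEpi_of_regularEpi hp; infer_instance
  haveI hu'strong : StrongEpi u' := by
    rw [← hpi]
    exact strongEpi_comp p i
  exact ⟨regEpi_of_strongEpi hfact u' hu'strong, huu', huniv⟩
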